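/- arXiv:2006.02660 — 3 statements merged into one kernel-verified Lean document; each statement's English description precedes it below -/
import Mathlib

section
/- Let H and H_l be Hermitian operators on a finite-dimensional complex Hilbert space with ‖H_l‖ ≤ JM for reals J > 0, M > 0, let λ > 0 and set α = eJ, let Δ' ≥ Λ' ≥ Λ be reals, and let H̄_l = Π_{≤Δ'} H_l Π_{≤Δ'}. Assume the leakage bound: for every s' ∈ ℝ, ‖Π_{>Δ'} e^{−i s' H_l} Π_{≤Λ}‖ ≤ e^{−λ(Δ' − Λ)} (e^{αM|s'|} − 1). Then for every s ∈ ℝ, ‖Π_{≤Λ'} (e^{−i s H̄_l} − e^{−i s H_l}) Π_{≤Λ}‖ ≤ e^{−λ(Δ' − Λ)} (e^{αM|s|} − 1 − αM|s|). -/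
noncomputable section

/-- Orthogonal projection onto the span of eigenvectors of `H` with eigenvalue at most `Λ`. -/
def projLE {E : Type*} [NormedAddCommGroup E] [InnerProductSpace ℂ E] [FiniteDimensional ℂ E]
    (H : E →L[ℂ] E) (Λ : ℝ) : E →L[ℂ] E :=
  (Submodule.subtypeL _).comp (Submodule.orthogonalProjectionOnto
    (⨆ μ ∈ Set.Iic Λ, Module.End.eigenspace (H : E →ₗ[ℂ] E) (μ : ℂ)))

/-- Orthogonal projection onto eigenvalues greater than `Λ`. -/
def projGT {E : Type*} [NormedAddCommGroup E] [InnerProductSpace ℂ E] [FiniteDimensional ℂ E]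
    (H : E →L[ℂ] E) (Λ : ℝ) : E →L[ℂ] E :=
  1 - projLE H Λ

/-- The unitary evolution `e^{-i s H}`. -/
def uexp {E : Type*} [NormedAddCommGroup E] [InnerProductSpace ℂ E] [FiniteDimensional ℂ E]
    (H : E →L[ℂ] E) (s : ℝ) : E →L[ℂ] E :=
  NormedSpace.exp ((-(Complex.I * (s : ℂ))) • H)

/-!
Duhamel interpolation: with `H̄ = Π_{≤Δ'} H_l Π_{≤Δ'}`, the map
`t ↦ Π_{≤Λ'} e^{-i(s-t)H̄} e^{-itH_l} Π_{≤Λ}` runs from `Π_{≤Λ'} e^{-isH̄} Π_{≤Λ}` to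
`Π_{≤Λ'} e^{-isH_l} Π_{≤Λ}`, with derivative `Π_{≤Λ'} e^{-i(s-t)H̄} (-i)(H_l - H̄) e^{-itH_l} Π_{≤Λ}`.
Since `Π_{≤Δ'}` commutes with `e^{-iτH̄}` and `Π_{≤Λ'} Π_{≤Δ'} = Π_{≤Λ'}`, this derivative equals
`-i Π_{≤Λ'} e^{-i(s-t)H̄} Π_{≤Δ'} H_l · Π_{>Δ'} e^{-itH_l} Π_{≤Λ}`: only the leaked part of the
true evolution contributes. Its norm is at most `JM e^{-λ(Δ'-Λ)} (e^{αMt} - 1)`, whose integral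
over `[0, s]` is `e^{-λ(Δ'-Λ)} (e^{αMs} - 1 - αMs) / e`. Negative times follow from
`H_l ↦ -H_l`, `s ↦ -s`.
-/

section

open NormedSpace

variable {E : Type*} [NormedAddCommGroup E] [InnerProductSpace ℂ E] [FiniteDimensional ℂ E]

section SpectralProjection

variable (H : E →L[ℂ] E)

lemma isStarProjection_projLE (Λ : ℝ) : IsStarProjection (projLE H Λ) :=
  isStarProjection_starProjection

lemma norm_projLE_le_one (Λ : ℝ) : ‖projLE H Λ‖ ≤ 1 :=
  Submodule.starProjection_norm_le _

lemma projLE_mul_projLE_of_le {Λ Λ' : ℝ} (h : Λ ≤ Λ') :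
    projLE H Λ * projLE H Λ' = projLE H Λ :=
  Submodule.starProjection_comp_starProjection_of_le (biSup_mono (Set.Iic_subset_Iic.mpr h))

lemma isSelfAdjoint_projLE_mul_mul_projLE {X : E →L[ℂ] E} (hX : IsSelfAdjoint X) (Δ' : ℝ) :
    IsSelfAdjoint (projLE H Δ' * (X * projLE H Δ')) := by
  simpa only [mul_assoc, (isStarProjection_projLE H Δ').isSelfAdjoint.star_eq] using
    hX.conjugate (projLE H Δ')

end SpectralProjection

lemma IsIdempotentElem.commute_mul_mul {R : Type*} [Semigroup R] {p : R} (hp : IsIdempotentElem p)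
    (x : R) : Commute p (p * (x * p)) := by
  simp only [Commute, SemiconjBy, ← mul_assoc, hp.eq]
  rw [mul_assoc, mul_assoc, mul_assoc, hp.eq]

lemma mul_mul_sub_compress {R : Type*} [Ring R] {p q w : R} (hqp : q * p = q)
    (hpw : Commute p w) (x : R) :
    q * w * (x - p * (x * p)) = q * w * (p * x) * (1 - p) := by
  have hqwp : q * w * p = q * w := by rw [mul_assoc, ← hpw.eq, ← mul_assoc, hqp]
  simp only [mul_sub, mul_one, ← mul_assoc, hqwp]

lemma hasDerivAt_exp_mul_sub_one_sub_mul (κ t : ℝ) :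
    HasDerivAt (fun t => Real.exp (κ * t) - 1 - κ * t) (κ * (Real.exp (κ * t) - 1)) t := by
  have h := (((hasDerivAt_id t).const_mul κ).exp.sub_const 1).sub ((hasDerivAt_id t).const_mul κ)
  simp only [id, mul_one] at h
  exact h.congr_deriv (by ring)

section Evolution

lemma uexp_eq_exp_smul (X : E →L[ℂ] E) (t : ℝ) : uexp X t = exp (t • ((-Complex.I) • X)) := by
  rw [uexp, RCLike.real_smul_eq_coe_smul (K := ℂ), smul_smul]
  congr 2
  simp only [Complex.coe_algebraMap, mul_neg, neg_inj]
  ring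

lemma uexp_zero (X : E →L[ℂ] E) : uexp X 0 = 1 := by
  rw [uexp, Complex.ofReal_zero, mul_zero, neg_zero, zero_smul, exp_zero]

lemma uexp_neg_left (X : E →L[ℂ] E) (t : ℝ) : uexp (-X) t = uexp X (-t) := by
  rw [uexp, uexp, smul_neg, ← neg_smul, Complex.ofReal_neg, mul_neg]

lemma uexp_mem_unitary {X : E →L[ℂ] E} (hX : IsSelfAdjoint X) (t : ℝ) :
    uexp X t ∈ unitary (E →L[ℂ] E) := by
  -- `exp_mem_unitary_of_mem_skewAdjoint` is stated for `ℚ`-algebras.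
  let : NormedAlgebra ℚ (E →L[ℂ] E) := .restrictScalars ℚ ℂ _
  refine exp_mem_unitary_of_mem_skewAdjoint (hX.smul_mem_skewAdjoint ?_)
  simp [skewAdjoint.mem_iff]

lemma Commute.uexp_right {P X : E →L[ℂ] E} (h : Commute P X) (t : ℝ) : Commute P (uexp X t) :=
  (h.smul_right _).exp_right

lemma hasDerivAt_uexp (X : E →L[ℂ] E) (t : ℝ) :
    HasDerivAt (uexp X) (uexp X t * ((-Complex.I) • X)) t := by
  simpa only [← uexp_eq_exp_smul] using
    hasDerivAt_exp_smul_const (𝕂 := ℝ) ((-Complex.I) • X) t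

lemma hasDerivAt_uexp_sub_mul_uexp (X Y : E →L[ℂ] E) (s t : ℝ) :
    HasDerivAt (fun t => uexp X (s - t) * uexp Y t)
      (uexp X (s - t) * ((-Complex.I) • (Y - X)) * uexp Y t) t := by
  have hX : HasDerivAt (fun t => uexp X (s - t)) (-(uexp X (s - t) * ((-Complex.I) • X))) t := by
    simpa [Function.comp_def] using
      (hasDerivAt_uexp X (s - t)).scomp t ((hasDerivAt_id t).const_sub s)
  have hY := hasDerivAt_uexp Y t
  have hYc : Commute (uexp Y t) ((-Complex.I) • Y) :=
    (((Commute.refl Y).smul_left (-Complex.I)).uexp_right t).symm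
  refine (hX.mul hY).congr_deriv ?_
  rw [hYc.eq, smul_sub]
  noncomm_ring

end Evolution

section Leakage

variable (H : E →L[ℂ] E) {X : E →L[ℂ] E} {Λ Λ' Δ' : ℝ}

lemma norm_projLE_mul_duhamel_mul_projLE_le (hX : IsSelfAdjoint X) (hΛ'Δ' : Λ' ≤ Δ') (τ : ℝ)
    (V : E →L[ℂ] E) :
    ‖projLE H Λ' * (uexp (projLE H Δ' * (X * projLE H Δ')) τ *
        ((-Complex.I) • (X - projLE H Δ' * (X * projLE H Δ'))) * V) * projLE H Λ‖ ≤
      ‖X‖ * ‖(1 - projLE H Δ') * (V * projLE H Λ)‖ := by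
  set P := projLE H Δ'
  set W := uexp (P * (X * P)) τ
  have hW : W ∈ unitary (E →L[ℂ] E) :=
    uexp_mem_unitary (isSelfAdjoint_projLE_mul_mul_projLE H hX Δ') τ
  have hPW : Commute P W :=
    ((isStarProjection_projLE H Δ').isIdempotentElem.commute_mul_mul X).uexp_right τ
  have hfactor : projLE H Λ' * (W * ((-Complex.I) • (X - P * (X * P))) * V) * projLE H Λ =
      (-Complex.I) • (projLE H Λ' * W * (P * X) * ((1 - P) * (V * projLE H Λ))) := by
    calc _ = (-Complex.I) • (projLE H Λ' * W * (X - P * (X * P)) * (V * projLE H Λ)) := by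
          simp only [mul_smul_comm, smul_mul_assoc, mul_assoc]
      _ = _ := by
          rw [mul_mul_sub_compress (projLE_mul_projLE_of_le H hΛ'Δ') hPW, mul_assoc]
  have hPX : ‖P * X‖ ≤ ‖X‖ :=
    (norm_mul_le _ _).trans (mul_le_of_le_one_left (norm_nonneg _) (norm_projLE_le_one H Δ'))
  have hQWPX : ‖projLE H Λ' * W * (P * X)‖ ≤ ‖X‖ := by
    rw [mul_assoc]
    refine (norm_mul_le _ _).trans ?_
    rw [CStarRing.norm_mem_unitary_mul _ hW]
    exact (mul_le_of_le_one_left (norm_nonneg _) (norm_projLE_le_one H Λ')).trans hPX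
  rw [hfactor, norm_smul, norm_neg, Complex.norm_I, one_mul]
  exact (norm_mul_le _ _).trans (mul_le_mul_of_nonneg_right hQWPX (norm_nonneg _))

theorem norm_projLE_mul_uexp_compress_sub_uexp_mul_projLE_le_of_nonneg (hX : IsSelfAdjoint X)
    {K c : ℝ} (hnorm : ‖X‖ ≤ K) (hc : 0 ≤ c) (hΛ'Δ' : Λ' ≤ Δ')
    (hleak : ∀ t, 0 ≤ t →
      ‖projGT H Δ' * (uexp X t * projLE H Λ)‖ ≤ c * (Real.exp (Real.exp 1 * K * t) - 1))
    {s : ℝ} (hs : 0 ≤ s) :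
    ‖projLE H Λ' * ((uexp (projLE H Δ' * (X * projLE H Δ')) s - uexp X s) * projLE H Λ)‖ ≤
      c * (Real.exp (Real.exp 1 * K * s) - 1 - Real.exp 1 * K * s) := by
  set Xb := projLE H Δ' * (X * projLE H Δ')
  set κ := Real.exp 1 * K
  set f : ℝ → E →L[ℂ] E := fun t =>
    projLE H Λ' * (uexp Xb (s - t) * uexp X t - uexp Xb s) * projLE H Λ
  have hf : ∀ t, HasDerivAt f
      (projLE H Λ' * (uexp Xb (s - t) * ((-Complex.I) • (X - Xb)) * uexp X t) * projLE H Λ) t :=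
    fun t => (((hasDerivAt_uexp_sub_mul_uexp Xb X s t).sub_const _).const_mul _).mul_const _
  -- `B' = K c (e^{κt} - 1)` because `κ = e K`; the factor `1 / e` is given away at the end.
  set B : ℝ → ℝ := fun t => c / Real.exp 1 * (Real.exp (κ * t) - 1 - κ * t)
  have hB : ∀ t, HasDerivAt B (K * (c * (Real.exp (κ * t) - 1))) t := fun t =>
    ((hasDerivAt_exp_mul_sub_one_sub_mul κ t).const_mul _).congr_deriv (by
      field_simp
      ring)
  have hfB : ‖f s‖ ≤ B s := by
    refine image_norm_le_of_norm_deriv_right_le_deriv_boundary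
      (fun t _ => (hf t).continuousAt.continuousWithinAt) (fun t _ => (hf t).hasDerivWithinAt)
      (by simp [f, B, uexp_zero]) hB (fun t ht => ?_) ⟨hs, le_rfl⟩
    exact (norm_projLE_mul_duhamel_mul_projLE_le H hX hΛ'Δ' _ _).trans
      (mul_le_mul hnorm (hleak t ht.1) (norm_nonneg _) ((norm_nonneg X).trans hnorm))
  have hfs : f s = -(projLE H Λ' * ((uexp Xb s - uexp X s) * projLE H Λ)) := by
    simp only [f, sub_self, uexp_zero, one_mul, ← neg_sub (uexp Xb s), neg_mul, mul_neg, mul_assoc]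
  have hg : 0 ≤ Real.exp (κ * s) - 1 - κ * s := by linarith [Real.add_one_le_exp (κ * s)]
  rw [← norm_neg, ← hfs]
  exact hfB.trans (mul_le_mul_of_nonneg_right
    (div_le_self hc (Real.one_le_exp zero_le_one)) hg)

end Leakage

end

theorem effective_vs_true_evolution_refined_general
    {E : Type*} [NormedAddCommGroup E] [InnerProductSpace ℂ E] [FiniteDimensional ℂ E]
    (H Hl : E →L[ℂ] E) (hHl : IsSelfAdjoint Hl)
    (J M lam : ℝ) (hnorm : ‖Hl‖ ≤ J * M)
    (Λ Λ' Δ' : ℝ) (hΛ'Δ' : Λ' ≤ Δ')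
    (hleak : ∀ s' : ℝ,
      ‖(projGT H Δ').comp ((uexp Hl s').comp (projLE H Λ))‖ ≤
        Real.exp (-lam * (Δ' - Λ)) * (Real.exp (Real.exp 1 * J * M * |s'|) - 1))
    (s : ℝ) :
    ‖(projLE H Λ').comp
        ((uexp ((projLE H Δ').comp (Hl.comp (projLE H Δ'))) s - uexp Hl s).comp
          (projLE H Λ))‖ ≤
      Real.exp (-lam * (Δ' - Λ)) *
        (Real.exp (Real.exp 1 * J * M * |s|) - 1 - Real.exp 1 * J * M * |s|) := by
  simp only [← ContinuousLinearMap.mul_def] at hleak ⊢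
  have hc := (Real.exp_pos (-lam * (Δ' - Λ))).le
  rcases le_total 0 s with hs | hs
  · rw [abs_of_nonneg hs, mul_assoc _ J M]
    refine norm_projLE_mul_uexp_compress_sub_uexp_mul_projLE_le_of_nonneg H hHl hnorm hc hΛ'Δ'
      (fun t ht => ?_) hs
    simpa only [abs_of_nonneg ht, mul_assoc _ J M] using hleak t
  · rw [abs_of_nonpos hs, mul_assoc _ J M]
    simpa only [neg_mul, mul_neg, neg_neg, uexp_neg_left] using
      norm_projLE_mul_uexp_compress_sub_uexp_mul_projLE_le_of_nonneg (Λ := Λ) H hHl.neg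
        ((norm_neg Hl).trans_le hnorm) hc hΛ'Δ'
        (fun t ht => by
          simpa only [uexp_neg_left, abs_neg, abs_of_nonneg ht, mul_assoc _ J M] using hleak (-t))
        (neg_nonneg.2 hs)

/-- Eq. (lemma3.1) inside the proof of Lemma 2: assuming the leakage bound
for the evolution under `H_l` past `Δ'`, the effective and true evolutions agree on the
low-energy block up to `e^{−λ(Δ'−Λ)} (e^{αM|s|} − 1 − αM|s|)`, where `α = eJ`. -/
theorem effective_vs_true_evolution_refined
    {E : Type*} [NormedAddCommGroup E] [InnerProductSpace ℂ E] [FiniteDimensional ℂ E]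
    (H Hl : E →L[ℂ] E) (hH : IsSelfAdjoint H) (hHl : IsSelfAdjoint Hl)
    (J M lam : ℝ) (hJ : 0 < J) (hM : 0 < M) (hnorm : ‖Hl‖ ≤ J * M) (hlam : 0 < lam)
    (Λ Λ' Δ' : ℝ) (hΛΛ' : Λ ≤ Λ') (hΛ'Δ' : Λ' ≤ Δ')
    (hleak : ∀ s' : ℝ,
      ‖(projGT H Δ').comp ((uexp Hl s').comp (projLE H Λ))‖ ≤
        Real.exp (-lam * (Δ' - Λ)) * (Real.exp (Real.exp 1 * J * M * |s'|) - 1))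
    (s : ℝ) :
    ‖(projLE H Λ').comp
        ((uexp ((projLE H Δ').comp (Hl.comp (projLE H Δ'))) s - uexp Hl s).comp
          (projLE H Λ))‖ ≤
      Real.exp (-lam * (Δ' - Λ)) *
        (Real.exp (Real.exp 1 * J * M * |s|) - 1 - Real.exp 1 * J * M * |s|) :=
  effective_vs_true_evolution_refined_general H Hl hHl J M lam hnorm Λ Λ' Δ' hΛ'Δ' hleak s
end
end

section
/- Let U and W be unitary operators on a finite-dimensional complex Hilbert space and let Π be an orthogonal projection such that U Π = Π U Π. Then for every natural number r, ‖(U^r − W^r) Π‖ ≤ 2 r ‖(U − W) Π‖. -/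
set_option maxHeartbeats 1000000 in

/-- telescoping error-accumulation bound used in the proof of Theorem 2:
for unitaries `U, W` and an orthogonal projection `Π` with `U Π = Π U Π`,
`‖(U^r − W^r) Π‖ ≤ 2 r ‖(U − W) Π‖` for every `r : ℕ`. -/
theorem trotter_error_accumulation
    {E : Type*} [NormedAddCommGroup E] [InnerProductSpace ℂ E] [FiniteDimensional ℂ E]
    (U W : E →L[ℂ] E) (hU : U ∈ unitary (E →L[ℂ] E)) (hW : W ∈ unitary (E →L[ℂ] E))
    (P : E →L[ℂ] E) (hP₁ : IsIdempotentElem P) (hP₂ : IsSelfAdjoint P)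
    (hUP : U.comp P = P.comp (U.comp P)) (r : ℕ) :
    ‖(U ^ r - W ^ r).comp P‖ ≤ 2 * r * ‖(U - W).comp P‖ := by
  simp only [← ContinuousLinearMap.mul_def] at *
  have hone : ‖(1 : E →L[ℂ] E)‖ ≤ 1 := by
    rw [ContinuousLinearMap.one_def]; exact ContinuousLinearMap.norm_id_le
  have hnorm : ∀ V : E →L[ℂ] E, V ∈ unitary (E →L[ℂ] E) → ‖V‖ ≤ 1 := by
    intro V hV
    have h1 : ‖star V * V‖ = ‖V‖ * ‖V‖ := CStarRing.norm_star_mul_self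
    rw [(Unitary.mem_iff.mp hV).1] at h1
    nlinarith [norm_nonneg V]
  have hPn : ‖P‖ ≤ 1 := by
    have h1 : ‖star P * P‖ = ‖P‖ * ‖P‖ := CStarRing.norm_star_mul_self
    rw [hP₂.star_eq, hP₁.eq] at h1
    nlinarith [norm_nonneg P]
  have hUn := hnorm U hU
  have hWn := hnorm W hW
  have hUk : ∀ k : ℕ, ‖U ^ k‖ ≤ 1 := by
    intro k
    induction k with
    | zero => rw [pow_zero]; exact hone
    | succ k ih =>
      calc ‖U ^ (k+1)‖ = ‖U * U ^ k‖ := by rw [pow_succ']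
        _ ≤ ‖U‖ * ‖U ^ k‖ := norm_mul_le _ _
        _ ≤ 1 * 1 := mul_le_mul hUn ih (norm_nonneg _) zero_le_one
        _ = 1 := one_mul 1
  have hinv : ∀ k : ℕ, U ^ k * P = P * (U ^ k * P) := by
    intro k
    induction k with
    | zero => simpa using hP₁.eq.symm
    | succ k ih =>
      calc U ^ (k+1) * P = U * (U ^ k * P) := by rw [pow_succ']; noncomm_ring
        _ = U * (P * (U ^ k * P)) := by rw [← ih]
        _ = (U * P) * (U ^ k * P) := by noncomm_ring
        _ = (P * (U * P)) * (U ^ k * P) := by rw [← hUP]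
        _ = P * ((U * (P * (U ^ k * P)))) := by noncomm_ring
        _ = P * (U ^ (k+1) * P) := by rw [← ih, pow_succ']; noncomm_ring
  have hUkP : ∀ k : ℕ, ‖U ^ k * P‖ ≤ 1 := by
    intro k
    calc ‖U ^ k * P‖ ≤ ‖U ^ k‖ * ‖P‖ := norm_mul_le _ _
      _ ≤ 1 * 1 := mul_le_mul (hUk k) hPn (norm_nonneg _) zero_le_one
      _ = 1 := one_mul 1
  have key : ∀ k : ℕ, ‖(U ^ k - W ^ k) * P‖ ≤ k * ‖(U - W) * P‖ := by
    intro k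
    induction k with
    | zero => rw [pow_zero, pow_zero, sub_self, zero_mul, norm_zero, Nat.cast_zero, zero_mul]
    | succ k ih =>
      have hdecomp : (U ^ (k+1) - W ^ (k+1)) * P
          = (U - W) * (P * (U ^ k * P)) + W * ((U ^ k - W ^ k) * P) := by
        rw [← hinv k, pow_succ', pow_succ']; noncomm_ring
      have h1 : ‖(U - W) * (P * (U ^ k * P))‖ ≤ ‖(U - W) * P‖ := by
        calc ‖(U - W) * (P * (U ^ k * P))‖ = ‖((U - W) * P) * (U ^ k * P)‖ := by
              rw [mul_assoc]
          _ ≤ ‖(U - W) * P‖ * ‖U ^ k * P‖ := norm_mul_le _ _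
          _ ≤ ‖(U - W) * P‖ * 1 := by
              exact mul_le_mul_of_nonneg_left (hUkP k) (norm_nonneg _)
          _ = ‖(U - W) * P‖ := mul_one _
      have h2 : ‖W * ((U ^ k - W ^ k) * P)‖ ≤ k * ‖(U - W) * P‖ := by
        calc ‖W * ((U ^ k - W ^ k) * P)‖ ≤ ‖W‖ * ‖(U ^ k - W ^ k) * P‖ := norm_mul_le _ _
          _ ≤ 1 * ‖(U ^ k - W ^ k) * P‖ :=
              mul_le_mul_of_nonneg_right hWn (norm_nonneg _)
          _ = ‖(U ^ k - W ^ k) * P‖ := one_mul _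
          _ ≤ k * ‖(U - W) * P‖ := ih
      calc ‖(U ^ (k+1) - W ^ (k+1)) * P‖
          ≤ ‖(U - W) * (P * (U ^ k * P))‖ + ‖W * ((U ^ k - W ^ k) * P)‖ := by
            rw [hdecomp]; exact norm_add_le _ _
        _ ≤ ‖(U - W) * P‖ + k * ‖(U - W) * P‖ := add_le_add h1 h2
        _ = (k + 1 : ℕ) * ‖(U - W) * P‖ := by push_cast; ring
  calc ‖(U ^ r - W ^ r) * P‖ ≤ r * ‖(U - W) * P‖ := key r
    _ ≤ 2 * r * ‖(U - W) * P‖ := by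
        have h := norm_nonneg ((U - W) * P)
        nlinarith [Nat.cast_nonneg (α := ℝ) r]
end

section
/- Let p ≥ 1 be a real number, let X be a real with 0 < X ≤ 4/e², and set z' = X^{1/p} / (e² log(e²/X))^{(p+1)/p}. Then 0 < z' < e^{−2} and (log(1/z'))^{p+1} (z')^p ≤ X. -/
/-- explicit solution bound in the proof of Theorem 2: for real `p ≥ 1`
and `0 < X ≤ 4/e²`, the value `z' = X^{1/p} / (e² log(e²/X))^{(p+1)/p}` satisfies
`0 < z' < e^{−2}` and `(log(1/z'))^{p+1} (z')^p ≤ X`. -/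
theorem aux_function_explicit_solution (p : ℝ) (hp : 1 ≤ p)
    (X : ℝ) (hX0 : 0 < X) (hX1 : X ≤ 4 / Real.exp 2) :
    0 < X ^ (1 / p) / (Real.exp 2 * Real.log (Real.exp 2 / X)) ^ ((p + 1) / p) ∧
    X ^ (1 / p) / (Real.exp 2 * Real.log (Real.exp 2 / X)) ^ ((p + 1) / p) <
      Real.exp (-2) ∧
    Real.log (1 / (X ^ (1 / p) / (Real.exp 2 * Real.log (Real.exp 2 / X)) ^ ((p + 1) / p)))
        ^ (p + 1) *
      (X ^ (1 / p) / (Real.exp 2 * Real.log (Real.exp 2 / X)) ^ ((p + 1) / p)) ^ p ≤ X := by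
  have hp0 : 0 < p := lt_of_lt_of_le one_pos hp
  have hE : (0:ℝ) < Real.exp 2 := Real.exp_pos 2
  have hE4 : (4:ℝ) ≤ Real.exp 2 := by
    have h := Real.exp_one_gt_d9
    have h2 : Real.exp 2 = Real.exp 1 * Real.exp 1 := by
      rw [← Real.exp_add]; norm_num
    nlinarith
  have hX1' : X ≤ 1 := le_trans hX1 (by rw [div_le_one hE]; linarith)
  set L := Real.log (Real.exp 2 / X) with hLdef
  have hlogX : Real.log X = 2 - L := by
    rw [hLdef, Real.log_div (Real.exp_ne_zero 2) hX0.ne', Real.log_exp]; ring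
  have hlogX0 : Real.log X ≤ 0 := Real.log_nonpos hX0.le hX1'
  have hL2 : 2 ≤ L := by linarith [hlogX]
  have hL0 : 0 < L := by linarith
  set A := Real.exp 2 * L with hAdef
  have hA0 : 0 < A := mul_pos hE hL0
  have hA1 : 1 < A := by nlinarith
  set z := X ^ (1 / p) / A ^ ((p + 1) / p) with hzdef
  have hz0 : 0 < z := div_pos (Real.rpow_pos_of_pos hX0 _) (Real.rpow_pos_of_pos hA0 _)
  have hzp : z ^ p = X / A ^ (p + 1) := by
    rw [hzdef, Real.div_rpow (Real.rpow_pos_of_pos hX0 _).le (Real.rpow_pos_of_pos hA0 _).le,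
      ← Real.rpow_mul hX0.le, ← Real.rpow_mul hA0.le]
    congr 1
    · rw [one_div_mul_cancel hp0.ne', Real.rpow_one]
    · congr 1; field_simp
  have hLp1 : (1:ℝ) ≤ L ^ (p + 1) := Real.one_le_rpow (by linarith) (by linarith)
  have hXlt : X < Real.exp 2 * L ^ (p + 1) := by nlinarith
  have hApow : A ^ (p + 1) = Real.exp (2 * (p + 1)) * L ^ (p + 1) := by
    rw [hAdef, Real.mul_rpow hE.le hL0.le, ← Real.exp_mul]
  have key : X < Real.exp (-2 * p) * A ^ (p + 1) := by
    have hee : Real.exp (-2 * p) * Real.exp (2 * (p + 1)) = Real.exp 2 := by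
      rw [← Real.exp_add]; ring_nf
    calc X < Real.exp 2 * L ^ (p + 1) := hXlt
      _ = Real.exp (-2 * p) * A ^ (p + 1) := by rw [hApow, ← mul_assoc, hee]
  have hAp1 : 0 < A ^ (p + 1) := Real.rpow_pos_of_pos hA0 _
  have hzp_lt : z ^ p < Real.exp (-2) ^ p := by
    rw [hzp, ← Real.exp_mul]
    rw [div_lt_iff₀ hAp1]
    linarith [key]
  have hzlt : z < Real.exp (-2) := by
    by_contra h
    push_neg at h
    have := Real.rpow_le_rpow (Real.exp_pos _).le h hp0.le
    linarith
  have hz1 : z < 1 := lt_trans hzlt (Real.exp_lt_one_iff.mpr (by norm_num))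
  have hlog1z : Real.log (1 / z) = -Real.log z := by rw [one_div, Real.log_inv]
  have hlog1z_nonneg : 0 ≤ Real.log (1 / z) := by
    rw [hlog1z]; linarith [Real.log_nonpos hz0.le hz1.le]
  have hlogA : Real.log A = 2 + Real.log L := by
    rw [hAdef, Real.log_mul (Real.exp_ne_zero 2) hL0.ne', Real.log_exp]
  have hlogz : Real.log z = (1 / p) * Real.log X - ((p + 1) / p) * Real.log A := by
    rw [hzdef, Real.log_div (Real.rpow_pos_of_pos hX0 _).ne' (Real.rpow_pos_of_pos hA0 _).ne',
      Real.log_rpow hX0, Real.log_rpow hA0]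
  have hinv : 1 / p ≤ 1 := by rw [div_le_one hp0]; exact hp
  have hinv0 : 0 < 1 / p := by positivity
  have hlogL : 0 ≤ Real.log L := Real.log_nonneg (by linarith)
  have hlogLe : Real.log L ≤ L - 1 := Real.log_le_sub_one_of_pos hL0
  have hmain : Real.log (1 / z) ≤ A := by
    rw [hlog1z, hlogz, hlogA, hlogX, hAdef]
    have hq : (p + 1) / p = 1 + 1 / p := by field_simp
    rw [hq]
    nlinarith [mul_nonneg (sub_nonneg.mpr hinv) (by linarith : (0:ℝ) ≤ 2 + Real.log L),
      mul_nonneg (sub_nonneg.mpr hinv) (by linarith : (0:ℝ) ≤ L - 2),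
      mul_nonneg (by linarith : (0:ℝ) ≤ Real.exp 2 - 4) hL0.le]
  have hpow : Real.log (1 / z) ^ (p + 1) ≤ A ^ (p + 1) :=
    Real.rpow_le_rpow hlog1z_nonneg hmain (by linarith)
  refine ⟨hz0, hzlt, ?_⟩
  have hzppos : (0:ℝ) ≤ z ^ p := (Real.rpow_pos_of_pos hz0 p).le
  calc Real.log (1 / z) ^ (p + 1) * z ^ p
      ≤ A ^ (p + 1) * z ^ p := mul_le_mul_of_nonneg_right hpow hzppos
    _ = A ^ (p + 1) * (X / A ^ (p + 1)) := by rw [hzp]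
    _ = X := by field_simp
end
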